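/- Let R ∈ ℓ¹(ℤ) be symmetric, (b_k) ∈ ℓ¹, and (b_{k,p}) a triangular array with ∑_{k=1}^p |b_{k,p}−b_k| → 0 and limsup_p ∑_{k=1}^p |b_{k,p}| ≤ ∑_k |b_k|. Define R_{k,p} and R̄_{k,p} by the filtered covariance formula C_{k} = ∑_{j=1}^p c_j² R_k + ∑_{t=1}^{p−1} ∑_{j=1}^{p−t} c_j c_{j+t}(R_{k−t}+R_{k+t}) with c = (b_j)_{j≤p} and c = (b_{j,p})_{j≤p} respectively. Then ∑_{k∈ℤ} |R_{k,p} − R̄_{k,p}| ≤ (∑_{i=1}^p |b_i| + ∑_{i=1}^p |b_{i,p}|)(∑_{i=1}^p |b_i − b_{i,p}|) ∑_{k∈ℤ}|R_k|, and hence this quantity tends to 0 as p → ∞. -/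

import Mathlib

/-!
Unfolding the double sum, `filtCov R c p k = ∑_{i,j ≤ p} c_i c_j R_{k+j-i}`, a quadratic form in
`c` with coefficients shifted copies of `R`. Hence the difference of two such covariances is
`∑_{i,j} (a_i a_j - c_i c_j) R_{k+j-i}`; shifting does not change `∑_k |R_k|`, and
`a_i a_j - c_i c_j = a_i (a_j - c_j) + (a_i - c_i) c_j` gives the coefficient bound
`(∑ |a| + ∑ |c|) ∑ |a - c|`. The limit follows since `∑_{i ≤ p} |b_{i,p}|` stays bounded.
-/

open Filter Finset

/-- Covariance of the filtered process `∑_{j=1}^p c_j X_{n-j}`: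
`C_k = ∑_{j=1}^p c_j² R_k + ∑_{t=1}^{p-1} ∑_{j=1}^{p-t} c_j c_{j+t} (R_{k-t} + R_{k+t})`. -/
noncomputable def filtCov (R : ℤ → ℝ) (c : ℕ → ℝ) (p : ℕ) (k : ℤ) : ℝ :=
  (∑ j ∈ Icc 1 p, c j ^ 2) * R k
    + ∑ t ∈ Icc 1 (p - 1), ∑ j ∈ Icc 1 (p - t), c j * c (j + t) * (R (k - t) + R (k + t))

theorem sum_Icc_sum_Icc_sub_eq_sum_lt {M : Type*} [AddCommMonoid M] (p : ℕ) (F : ℕ → ℕ → M) :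
    ∑ t ∈ Icc 1 (p - 1), ∑ j ∈ Icc 1 (p - t), F j (j + t)
      = ∑ i ∈ Icc 1 p, ∑ j ∈ Icc 1 p, if i < j then F i j else 0 := by
  rw [sum_sigma', ← sum_product', ← sum_filter]
  refine sum_nbij' (fun x => (x.2, x.2 + x.1)) (fun y => ⟨y.2 - y.1, y.1⟩) ?_ ?_ ?_ ?_
    (fun _ _ => rfl)
  · rintro ⟨t, j⟩ h
    simp only [mem_sigma, mem_filter, mem_product, mem_Icc] at h ⊢
    omega
  · rintro ⟨i, j⟩ h
    simp only [mem_sigma, mem_filter, mem_product, mem_Icc] at h ⊢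
    omega
  · rintro ⟨t, j⟩ -
    simp only [add_tsub_cancel_left]
  · rintro ⟨i, j⟩ h
    simp only [mem_filter, mem_product, mem_Icc] at h
    exact Prod.ext rfl (Nat.add_sub_cancel' h.2.le)

theorem sum_Icc_sum_Icc_eq_diag_add_offDiag {M : Type*} [AddCommMonoid M] (p : ℕ)
    (F : ℕ → ℕ → M) :
    ∑ i ∈ Icc 1 p, ∑ j ∈ Icc 1 p, F i j
      = ∑ j ∈ Icc 1 p, F j j
        + ∑ t ∈ Icc 1 (p - 1), ∑ j ∈ Icc 1 (p - t), (F j (j + t) + F (j + t) j) := by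
  have split (i j : ℕ) : F i j = (if i = j then F i j else 0)
      + ((if i < j then F i j else 0) + if j < i then F i j else 0) := by
    rcases lt_trichotomy i j with h | rfl | h
    · simp [h, h.ne, h.not_gt]
    · simp
    · simp [h, h.ne', h.not_gt]
  simp only [sum_add_distrib]
  rw [sum_Icc_sum_Icc_sub_eq_sum_lt p F, sum_Icc_sum_Icc_sub_eq_sum_lt p (fun i j => F j i),
    sum_comm (s := Icc 1 p) (t := Icc 1 p) (f := fun i j => if i < j then F j i else 0)]
  conv_lhs => enter [2, i, 2, j]; rw [split i j]
  simp only [sum_add_distrib, sum_ite_eq, sum_ite_mem, inter_self]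

theorem filtCov_eq_sum_sum (R : ℤ → ℝ) (c : ℕ → ℝ) (p : ℕ) (k : ℤ) :
    filtCov R c p k = ∑ i ∈ Icc 1 p, ∑ j ∈ Icc 1 p, c i * c j * R (k + (j - i)) := by
  rw [sum_Icc_sum_Icc_eq_diag_add_offDiag, filtCov, sum_mul]
  congr 1
  · refine sum_congr rfl fun j _ => ?_
    rw [sub_self, add_zero, sq]
  · refine sum_congr rfl fun t _ => sum_congr rfl fun j _ => ?_
    have hpos : (k + ((j + t : ℕ) - j : ℤ)) = k + t := by push_cast; ring
    have hneg : (k + (j - (j + t : ℕ) : ℤ)) = k - t := by push_cast; ring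
    rw [hpos, hneg]
    ring

theorem tsum_abs_sum_mul_shift_le {ι : Type*} (s : Finset ι) (w : ι → ℝ) (d : ι → ℤ)
    {R : ℤ → ℝ} (hR : Summable fun k => |R k|) :
    ∑' k, |∑ i ∈ s, w i * R (k + d i)| ≤ (∑ i ∈ s, |w i|) * ∑' k, |R k| := by
  have hshift (i : ι) : Summable fun k => |R (k + d i)| :=
    (Equiv.addRight (d i)).summable_iff.mpr hR
  have hmaj : Summable fun k => ∑ i ∈ s, |w i| * |R (k + d i)| :=
    summable_sum fun i _ => (hshift i).mul_left _
  have hle (k : ℤ) : |∑ i ∈ s, w i * R (k + d i)| ≤ ∑ i ∈ s, |w i| * |R (k + d i)| :=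
    (abs_sum_le_sum_abs _ _).trans_eq (by simp only [abs_mul])
  calc ∑' k, |∑ i ∈ s, w i * R (k + d i)|
      ≤ ∑' k, ∑ i ∈ s, |w i| * |R (k + d i)| :=
        (hmaj.of_nonneg_of_le (fun _ => abs_nonneg _) hle).tsum_le_tsum hle hmaj
    _ = ∑ i ∈ s, |w i| * ∑' k, |R (k + d i)| := by
        rw [Summable.tsum_finsetSum fun i _ => (hshift i).mul_left _]
        simp only [tsum_mul_left]
    _ = (∑ i ∈ s, |w i|) * ∑' k, |R k| := by
        rw [sum_mul]
        refine sum_congr rfl fun i _ => congrArg _ ?_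
        exact (Equiv.addRight (d i)).tsum_eq fun k => |R k|

theorem sum_sum_abs_mul_sub_mul_le {ι : Type*} (s : Finset ι) (a c : ι → ℝ) :
    ∑ i ∈ s, ∑ j ∈ s, |a i * a j - c i * c j|
      ≤ (∑ i ∈ s, |a i| + ∑ i ∈ s, |c i|) * ∑ i ∈ s, |a i - c i| := by
  calc ∑ i ∈ s, ∑ j ∈ s, |a i * a j - c i * c j|
      ≤ ∑ i ∈ s, ∑ j ∈ s, (|a i| * |a j - c j| + |a i - c i| * |c j|) := by
        gcongr with i _ j _
        rw [← abs_mul, ← abs_mul,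
          show a i * a j - c i * c j = a i * (a j - c j) + (a i - c i) * c j by ring]
        exact abs_add_le _ _
    _ = (∑ i ∈ s, |a i| + ∑ i ∈ s, |c i|) * ∑ i ∈ s, |a i - c i| := by
        simp only [sum_add_distrib, ← mul_sum, ← sum_mul]
        ring

theorem tsum_abs_filtCov_sub_le {R : ℤ → ℝ} (hR : Summable fun k => |R k|) (a c : ℕ → ℝ)
    (p : ℕ) :
    ∑' k, |filtCov R a p k - filtCov R c p k|
      ≤ (∑ i ∈ Icc 1 p, |a i| + ∑ i ∈ Icc 1 p, |c i|) * (∑ i ∈ Icc 1 p, |a i - c i|)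
          * ∑' k, |R k| := by
  have hdiff (k : ℤ) : filtCov R a p k - filtCov R c p k
      = ∑ x ∈ Icc 1 p ×ˢ Icc 1 p, (a x.1 * a x.2 - c x.1 * c x.2) * R (k + (x.2 - x.1)) := by
    simp only [filtCov_eq_sum_sum, sum_product, ← sum_sub_distrib, sub_mul]
  simp_rw [hdiff]
  refine (tsum_abs_sum_mul_shift_le _ _ _ hR).trans ?_
  rw [sum_product]
  gcongr
  exact sum_sum_abs_mul_sub_mul_le _ _ _

theorem stmt_11_general (R : ℤ → ℝ) (hR : Summable fun k => |R k|)
    (b : ℕ → ℕ → ℝ) (blim : ℕ → ℝ) (hb : Summable fun k => |blim k|)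
    (h : Tendsto (fun p => ∑ k ∈ Icc 1 p, |b k p - blim k|) atTop (nhds 0)) :
    (∀ p, ∑' k : ℤ, |filtCov R blim p k - filtCov R (fun j => b j p) p k|
        ≤ (∑ i ∈ Icc 1 p, |blim i| + ∑ i ∈ Icc 1 p, |b i p|)
            * (∑ i ∈ Icc 1 p, |blim i - b i p|) * ∑' k : ℤ, |R k|) ∧
      Tendsto (fun p => ∑' k : ℤ, |filtCov R blim p k - filtCov R (fun j => b j p) p k|)
        atTop (nhds 0) := by
  have hbound (p : ℕ) := tsum_abs_filtCov_sub_le hR blim (fun j => b j p) p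
  refine ⟨hbound, ?_⟩
  set A := ∑' k, |blim k|
  set T := ∑' k : ℤ, |R k|
  set δ : ℕ → ℝ := fun p => ∑ i ∈ Icc 1 p, |blim i - b i p|
  have hδ : Tendsto δ atTop (nhds 0) := by simpa only [δ, abs_sub_comm] using h
  have hA (p : ℕ) : ∑ i ∈ Icc 1 p, |blim i| ≤ A := hb.sum_le_tsum _ fun i _ => abs_nonneg _
  have hmass (p : ℕ) : ∑ i ∈ Icc 1 p, |blim i| + ∑ i ∈ Icc 1 p, |b i p| ≤ 2 * A + δ p := by
    have hb_le : ∑ i ∈ Icc 1 p, |b i p| ≤ ∑ i ∈ Icc 1 p, |blim i| + δ p := by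
      rw [← sum_add_distrib]
      refine sum_le_sum fun i _ => ?_
      linarith [abs_sub_abs_le_abs_sub (b i p) (blim i), abs_sub_comm (b i p) (blim i)]
    linarith [hA p]
  refine squeeze_zero (fun p => tsum_nonneg fun _ => abs_nonneg _)
    (fun p => (hbound p).trans ?_) (g := fun p => (2 * A + δ p) * δ p * T) ?_
  · gcongr ?_ * _ * _
    exact hmass p
  · simpa using ((tendsto_const_nhds.add hδ).mul hδ).mul_const T

theorem stmt_11 (R : ℤ → ℝ) (hsym : ∀ k, R (-k) = R k) (hR : Summable fun k => |R k|)
    (b : ℕ → ℕ → ℝ) (blim : ℕ → ℝ) (hb : Summable fun k => |blim k|)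
    (h : Tendsto (fun p => ∑ k ∈ Icc 1 p, |b k p - blim k|) atTop (nhds 0))
    (hsup : limsup (fun p => ∑ k ∈ Icc 1 p, |b k p|) atTop ≤ ∑' k : ℕ, |blim (k + 1)|) :
    (∀ p, ∑' k : ℤ, |filtCov R blim p k - filtCov R (fun j => b j p) p k|
        ≤ (∑ i ∈ Icc 1 p, |blim i| + ∑ i ∈ Icc 1 p, |b i p|)
            * (∑ i ∈ Icc 1 p, |blim i - b i p|) * ∑' k : ℤ, |R k|) ∧
      Tendsto (fun p => ∑' k : ℤ, |filtCov R blim p k - filtCov R (fun j => b j p) p k|)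
        atTop (nhds 0) :=
  stmt_11_general R hR b blim hb h
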